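/- Let X = [x_1, ..., x_M] be a sequence of vectors in R^l with M divisible by k, and P the coordinate-wise max-pooling with window size k and stride k. For each block i (1 ≤ i ≤ M/k), let X_i^↑ ∈ R^l be the coordinate-wise maximum over the block and X_i^↓ ∈ R^l the coordinate-wise minimum. Then d_F(X, P(X)) ≤ max_{1 ≤ i ≤ M/k} ||X_i^↓ − X_i^↑||_2. -/

import Mathlib

/-! Match every element of block `i` with the pooled vector `pool X i`. Since the block index
`g / k` advances by at most one per step, this is a coupling, and along it each coordinate of
`X g - pool X i` lies between `0` and the corresponding coordinate of `blockMin X i - pool X i`,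
so every matched distance is at most `‖blockMin X i - pool X i‖`. -/

open scoped BigOperators

instance finNonempty {n : ℕ} [NeZero n] : Nonempty (Fin n) :=
  ⟨⟨0, Nat.pos_of_ne_zero (NeZero.ne n)⟩⟩

instance neZeroMulNat {a b : ℕ} [NeZero a] [NeZero b] : NeZero (a * b) :=
  ⟨Nat.mul_ne_zero (NeZero.ne a) (NeZero.ne b)⟩

/-- The last index of `Fin n`. -/
def lastIdx (n : ℕ) [NeZero n] : Fin n :=
  ⟨n - 1, by have := Nat.pos_of_ne_zero (NeZero.ne n); omega⟩

/-- A monotone coupling between the index sets of two finite sequences: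
it starts at the pair of first indices, ends at the pair of last indices,
and each index advances by at most one per step. -/
def IsCoupling {M N : ℕ} [NeZero M] [NeZero N] (L : List (Fin M × Fin N)) : Prop :=
  L.head? = some (0, 0) ∧
  L.getLast? = some (lastIdx M, lastIdx N) ∧
  L.Chain' fun p q =>
    (q.1.val = p.1.val ∨ q.1.val = p.1.val + 1) ∧
    (q.2.val = p.2.val ∨ q.2.val = p.2.val + 1)

/-- The maximum matched distance of a coupling. -/
noncomputable def couplingCost {α : Type*} [PseudoMetricSpace α] {M N : ℕ}
    (x : Fin M → α) (y : Fin N → α) (L : List (Fin M × Fin N)) : ℝ :=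
  (L.map fun p => dist (x p.1) (y p.2)).foldr max 0

/-- The discrete Fréchet distance between two finite sequences. -/
noncomputable def dFrechet {α : Type*} [PseudoMetricSpace α] {M N : ℕ} [NeZero M] [NeZero N]
    (x : Fin M → α) (y : Fin N → α) : ℝ :=
  sInf {r | ∃ L, IsCoupling L ∧ couplingCost x y L = r}

/-- The global index of the `t`-th element of the `i`-th pooling block. -/
def blockIdx {a k : ℕ} (i : Fin a) (t : Fin k) : Fin (a * k) :=
  ⟨i.val * k + t.val, by
    have h1 := t.isLt
    have h2 : i.val + 1 ≤ a := i.isLt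
    calc i.val * k + t.val < i.val * k + k := by omega
      _ = (i.val + 1) * k := by ring
      _ ≤ a * k := Nat.mul_le_mul_right k h2⟩

/-- Coordinate-wise 1D max-pooling with window size `k` and stride `k`. -/
noncomputable def pool {l a k : ℕ} [NeZero k] (X : Fin (a * k) → EuclideanSpace ℝ (Fin l)) :
    Fin a → EuclideanSpace ℝ (Fin l) :=
  fun i => (WithLp.equiv 2 (Fin l → ℝ)).symm fun j =>
    Finset.univ.sup' Finset.univ_nonempty fun t : Fin k => X (blockIdx i t) j

/-- The coordinate-wise minimum vector of the `i`-th pooling block. -/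
noncomputable def blockMin {l a k : ℕ} [NeZero k] (X : Fin (a * k) → EuclideanSpace ℝ (Fin l)) :
    Fin a → EuclideanSpace ℝ (Fin l) :=
  fun i => (WithLp.equiv 2 (Fin l → ℝ)).symm fun j =>
    Finset.univ.inf' Finset.univ_nonempty fun t : Fin k => X (blockIdx i t) j

theorem List.foldr_max_le_iff {α : Type*} [LinearOrder α] {l : List α} {b B : α} :
    l.foldr max b ≤ B ↔ b ≤ B ∧ ∀ x ∈ l, x ≤ B := by
  induction l with
  | nil => simp
  | cons x l ih => simp only [List.foldr_cons, max_le_iff, ih, List.forall_mem_cons]; tauto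

section Coupling

variable {α : Type*} [PseudoMetricSpace α] {M N : ℕ}

theorem couplingCost_le {x : Fin M → α} {y : Fin N → α} {L : List (Fin M × Fin N)} {B : ℝ}
    (hL : L ≠ []) (h : ∀ p ∈ L, dist (x p.1) (y p.2) ≤ B) : couplingCost x y L ≤ B := by
  obtain ⟨p, hp⟩ := List.exists_mem_of_ne_nil L hL
  refine List.foldr_max_le_iff.2 ⟨dist_nonneg.trans (h p hp), ?_⟩
  simpa only [List.mem_map, forall_exists_index, and_imp, forall_apply_eq_imp_iff₂] using h

theorem dFrechet_le_of_isCoupling [NeZero M] [NeZero N] {x : Fin M → α} {y : Fin N → α}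
    {L : List (Fin M × Fin N)} (hL : IsCoupling L) {B : ℝ}
    (h : ∀ p ∈ L, dist (x p.1) (y p.2) ≤ B) : dFrechet x y ≤ B := by
  have hne : L ≠ [] := by rintro rfl; simp [IsCoupling] at hL
  have hbdd : BddBelow {r | ∃ L, IsCoupling L ∧ couplingCost x y L = r} :=
    ⟨0, by rintro _ ⟨L, -, rfl⟩; exact List.foldr_max_le_iff.1 le_rfl |>.1⟩
  exact (csInf_le hbdd ⟨L, hL, rfl⟩).trans (couplingCost_le hne h)

end Coupling

def graphCoupling {M N : ℕ} (f : Fin M → Fin N) : List (Fin M × Fin N) :=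
  (List.finRange M).map fun t => (t, f t)

theorem isCoupling_graphCoupling {M N : ℕ} [NeZero M] [NeZero N] {f : Fin M → Fin N}
    (h_zero : f 0 = 0) (h_last : f (lastIdx M) = lastIdx N)
    (h_step : ∀ (n : ℕ) (hn : n + 1 < M),
      (f ⟨n + 1, hn⟩).val = (f ⟨n, n.lt_of_succ_lt hn⟩).val ∨
        (f ⟨n + 1, hn⟩).val = (f ⟨n, n.lt_of_succ_lt hn⟩).val + 1) :
    IsCoupling (graphCoupling f) := by
  have hM : 0 < M := Nat.pos_of_ne_zero (NeZero.ne M)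
  refine ⟨?_, ?_, ?_⟩
  · rw [List.head?_eq_getElem?]
    simp [graphCoupling, hM, h_zero]
  · rw [List.getLast?_eq_getElem?]
    simpa [graphCoupling, hM, lastIdx] using h_last
  · rw [List.Chain', graphCoupling, List.isChain_map, List.isChain_iff_getElem]
    intro n hn
    simp only [List.length_finRange, List.getElem_finRange] at hn ⊢
    exact ⟨Or.inr rfl, h_step n hn⟩

theorem EuclideanSpace.dist_le_dist_of_abs_sub_le {ι : Type*} [Fintype ι]
    {u v w z : EuclideanSpace ℝ ι} (h : ∀ j, |u j - v j| ≤ |w j - z j|) :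
    dist u v ≤ dist w z := by
  simp only [EuclideanSpace.dist_eq, Real.dist_eq]
  exact Real.sqrt_le_sqrt (Finset.sum_le_sum fun j _ => pow_le_pow_left₀ (abs_nonneg _) (h j) 2)

theorem Nat.succ_div_eq_or (n k : ℕ) : (n + 1) / k = n / k ∨ (n + 1) / k = n / k + 1 := by
  rw [Nat.succ_div]
  split_ifs <;> simp

theorem Fin.divNat_lastIdx (a k : ℕ) [NeZero a] [NeZero k] :
    (lastIdx (a * k)).divNat = lastIdx a := by
  have ha := Nat.pos_of_ne_zero (NeZero.ne a)
  have hk := Nat.pos_of_ne_zero (NeZero.ne k)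
  ext
  simp only [Fin.coe_divNat, lastIdx]
  apply Nat.div_eq_of_lt_le
  · rw [Nat.sub_one_mul]
    omega
  · rw [Nat.sub_add_cancel ha]
    exact Nat.sub_lt (Nat.mul_pos ha hk) Nat.one_pos

theorem blockIdx_divNat_modNat {a k : ℕ} (g : Fin (a * k)) : blockIdx g.divNat g.modNat = g :=
  Fin.ext (Nat.div_add_mod' g.val k)

theorem dist_le_norm_blockMin_sub_pool {l a k : ℕ} [NeZero k]
    (X : Fin (a * k) → EuclideanSpace ℝ (Fin l)) (i : Fin a) (t : Fin k) :
    dist (X (blockIdx i t)) (pool X i) ≤ ‖blockMin X i - pool X i‖ := by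
  rw [← dist_eq_norm]
  refine EuclideanSpace.dist_le_dist_of_abs_sub_le fun j => abs_le_abs_of_nonpos ?_ ?_
  · exact sub_nonpos.2 (Finset.le_sup' (fun t => X (blockIdx i t) j) (Finset.mem_univ t))
  · exact sub_le_sub_right (Finset.inf'_le (fun t => X (blockIdx i t) j) (Finset.mem_univ t)) _

theorem dFrechet_to_pool_bound {l a k : ℕ} [NeZero a] [NeZero k]
    (X : Fin (a * k) → EuclideanSpace ℝ (Fin l)) :
    dFrechet X (pool X)
      ≤ Finset.univ.sup' Finset.univ_nonempty fun i : Fin a => ‖blockMin X i - pool X i‖ := by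
  have h_coupling : IsCoupling (graphCoupling (Fin.divNat : Fin (a * k) → Fin a)) :=
    isCoupling_graphCoupling (Fin.ext (Nat.zero_div k)) (Fin.divNat_lastIdx a k)
      fun n _ => Nat.succ_div_eq_or n k
  refine dFrechet_le_of_isCoupling h_coupling ?_
  simp only [graphCoupling, List.mem_map, List.mem_finRange, true_and]
  rintro _ ⟨g, rfl⟩
  calc dist (X g) (pool X g.divNat)
      = dist (X (blockIdx g.divNat g.modNat)) (pool X g.divNat) := by
        rw [blockIdx_divNat_modNat]
    _ ≤ ‖blockMin X g.divNat - pool X g.divNat‖ := dist_le_norm_blockMin_sub_pool X _ _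
    _ ≤ _ := Finset.le_sup' (fun i => ‖blockMin X i - pool X i‖) (Finset.mem_univ _)
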